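/- For α, β > -1, k ≥ 1, any C^k function f on (0,π), and θ ∈ (0,π), one has (D^{(k)})* f(θ) = ((-1)^k / Ψ^{α,β}(θ)) · sin θ · ((1/sin θ) d/dθ)^k ( (sin θ)^{k-1} Ψ^{α,β}(θ) f(θ) ), where (D^{(k)})* = D_{α,β}* ∘ ⋯ ∘ D_{α+k-1,β+k-1}*. -/

import Mathlib

open Real MeasureTheory Set

/-- Classical Jacobi polynomial (Szegő normalization), via the explicit sum. -/
noncomputable def jacobiP (α β : ℝ) (n : ℕ) (x : ℝ) : ℝ :=
  (Real.Gamma (α + n + 1) / ((Nat.factorial n : ℝ) * Real.Gamma (α + β + n + 1))) *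
    ∑ m ∈ Finset.range (n + 1),
      (Nat.choose n m : ℝ) * (Real.Gamma (α + β + n + m + 1) / Real.Gamma (α + m + 1)) *
        ((x - 1) / 2) ^ m

/-- Ψ^{α,β}(θ) = (sin(θ/2))^{α+1/2} (cos(θ/2))^{β+1/2}. -/
noncomputable def psiF (α β θ : ℝ) : ℝ :=
  Real.sin (θ / 2) ^ (α + 1/2) * Real.cos (θ / 2) ^ (β + 1/2)

/-- Normalizing constant making φ_n^{α,β} of unit L²(0,π)-norm. -/
noncomputable def jacobiC (α β : ℝ) (n : ℕ) : ℝ :=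
  (Real.sqrt (∫ θ in Set.Ioo (0:ℝ) Real.pi,
    (psiF α β θ * jacobiP α β n (Real.cos θ)) ^ 2))⁻¹

/-- Jacobi trigonometric function φ_n^{α,β}. -/
noncomputable def phiF (α β : ℝ) (n : ℕ) (θ : ℝ) : ℝ :=
  psiF α β θ * jacobiC α β n * jacobiP α β n (Real.cos θ)

/-- First order Jacobi derivative D_{α,β}. -/
noncomputable def jacobiD (α β : ℝ) (f : ℝ → ℝ) (θ : ℝ) : ℝ :=
  deriv f θ - ((2*α+1)/4) * (Real.cos (θ/2) / Real.sin (θ/2)) * f θ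
    + ((2*β+1)/4) * Real.tan (θ/2) * f θ

/-- Formal adjoint D_{α,β}* = D_{α,β} - 2 d/dθ. -/
noncomputable def jacobiDStar (α β : ℝ) (f : ℝ → ℝ) (θ : ℝ) : ℝ :=
  jacobiD α β f θ - 2 * deriv f θ

/-- Higher order derivative D^{(k)} = D_{α+k-1,β+k-1} ∘ ⋯ ∘ D_{α,β}. -/
noncomputable def jacobiDk (α β : ℝ) : ℕ → (ℝ → ℝ) → ℝ → ℝ
  | 0 => fun f => f
  | (k+1) => fun f => jacobiD (α + k) (β + k) (jacobiDk α β k f)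

/-- Adjoint higher order derivative (D^{(k)})* = D_{α,β}* ∘ ⋯ ∘ D_{α+k-1,β+k-1}*. -/
noncomputable def jacobiDkStar (α β : ℝ) : ℕ → (ℝ → ℝ) → ℝ → ℝ
  | 0 => fun f => f
  | (k+1) => fun f => jacobiDStar α β (jacobiDkStar (α+1) (β+1) k f)

/-- The operator g ↦ g'/sin θ. -/
noncomputable def sinD (g : ℝ → ℝ) : ℝ → ℝ := fun θ => deriv g θ / Real.sin θ

/-!
Since Ψ'/Ψ = ((2α+1)/4) cot(θ/2) - ((2β+1)/4) tan(θ/2), the first order adjoint is a conjugated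
derivative, D_{α,β}* g = -Ψ⁻¹ (Ψ g)', with Ψ = Ψ^{α,β}. Moreover Ψ^{α+1,β+1} = Ψ^{α,β} sin θ / 2,
so shifting the parameters multiplies the weight by sin θ. Induction on k then gives
(D^{(k)})*_{α+1,β+1} f = (-1)^k Ψ⁻¹ ((1/sin θ) d/dθ)^k (sin^k θ Ψ f) with Ψ = Ψ^{α,β},
and one more application of D_{α,β}* yields the factorization.
-/

lemma sin_half_pos {θ : ℝ} (hθ : θ ∈ Ioo 0 π) : 0 < sin (θ / 2) :=
  sin_pos_of_pos_of_lt_pi (by linarith [hθ.1]) (by linarith [hθ.2, pi_pos])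

lemma cos_half_pos {θ : ℝ} (hθ : θ ∈ Ioo 0 π) : 0 < cos (θ / 2) :=
  cos_pos_of_mem_Ioo ⟨by linarith [hθ.1, pi_pos], by linarith [hθ.2]⟩

lemma psiF_pos (α β : ℝ) {θ : ℝ} (hθ : θ ∈ Ioo 0 π) : 0 < psiF α β θ :=
  mul_pos (rpow_pos_of_pos (sin_half_pos hθ) _) (rpow_pos_of_pos (cos_half_pos hθ) _)

lemma psiF_add_one (α β : ℝ) {θ : ℝ} (hθ : θ ∈ Ioo 0 π) :
    psiF (α + 1) (β + 1) θ = psiF α β θ * (sin θ / 2) := by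
  have hdouble : sin θ = 2 * sin (θ / 2) * cos (θ / 2) := by
    rw [← sin_two_mul, mul_div_cancel₀ θ two_ne_zero]
  rw [psiF, psiF, show α + 1 + 1/2 = (α + 1/2) + 1 by ring,
    show β + 1 + 1/2 = (β + 1/2) + 1 by ring, rpow_add (sin_half_pos hθ),
    rpow_add (cos_half_pos hθ), rpow_one, rpow_one, hdouble]
  ring

lemma hasDerivAt_psiF (α β : ℝ) {θ : ℝ} (hθ : θ ∈ Ioo 0 π) :
    HasDerivAt (psiF α β)
      (psiF α β θ * ((2*α+1)/4 * (cos (θ/2) / sin (θ/2)) - (2*β+1)/4 * tan (θ/2))) θ := by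
  have hs := sin_half_pos hθ
  have hc := cos_half_pos hθ
  have hhalf : HasDerivAt (fun t : ℝ => t / 2) (1 / 2) θ := (hasDerivAt_id θ).div_const 2
  have hsin := ((hasDerivAt_sin (θ / 2)).comp θ hhalf).rpow_const (p := α + 1/2) (Or.inl hs.ne')
  have hcos := ((hasDerivAt_cos (θ / 2)).comp θ hhalf).rpow_const (p := β + 1/2) (Or.inl hc.ne')
  refine (hsin.mul hcos).congr_deriv ?_
  simp only [Function.comp_apply]
  rw [psiF, rpow_sub hs, rpow_sub hc, rpow_one, rpow_one, tan_eq_sin_div_cos]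
  field_simp
  ring

lemma contDiffOn_psiF (α β : ℝ) (n : WithTop ℕ∞) : ContDiffOn ℝ n (psiF α β) (Ioo 0 π) := by
  have hhalf : ContDiff ℝ n (fun t : ℝ => t / 2) := contDiff_id.div_const 2
  exact ((contDiff_sin.comp hhalf).contDiffOn.rpow_const_of_ne
    fun t ht => (sin_half_pos ht).ne').mul
    ((contDiff_cos.comp hhalf).contDiffOn.rpow_const_of_ne fun t ht => (cos_half_pos ht).ne')

lemma jacobiDStar_congr {α β θ : ℝ} {g₁ g₂ : ℝ → ℝ} (h : g₁ =ᶠ[nhds θ] g₂) :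
    jacobiDStar α β g₁ θ = jacobiDStar α β g₂ θ := by
  simp only [jacobiDStar, jacobiD, h.deriv_eq, h.eq_of_nhds]

lemma jacobiDStar_div_psiF (α β : ℝ) {G : ℝ → ℝ} {θ : ℝ} (hθ : θ ∈ Ioo 0 π)
    (hG : DifferentiableAt ℝ G θ) :
    jacobiDStar α β (fun t => G t / psiF α β t) θ = -deriv G θ / psiF α β θ := by
  have hΨ := (psiF_pos α β hθ).ne'
  have hquot : HasDerivAt (fun t => G t / psiF α β t) _ θ :=
    hG.hasDerivAt.div (hasDerivAt_psiF α β hθ) hΨ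
  rw [jacobiDStar, jacobiD, hquot.deriv]
  field_simp
  ring

lemma sinD_iterate_const_mul (c : ℝ) (k : ℕ) (g : ℝ → ℝ) :
    sinD^[k] (fun t => c * g t) = fun t => c * sinD^[k] g t := by
  induction k generalizing g with
  | zero => rfl
  | succ k ih =>
    have hsinD : sinD (fun t => c * g t) = fun t => c * sinD g t := by
      funext t
      simp only [sinD, deriv_const_mul_field, mul_div_assoc]
    rw [Function.iterate_succ_apply, Function.iterate_succ_apply, hsinD, ih]

lemma sinD_iterate_eqOn {U : Set ℝ} (hU : IsOpen U) (k : ℕ) {g₁ g₂ : ℝ → ℝ} (h : EqOn g₁ g₂ U) :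
    EqOn (sinD^[k] g₁) (sinD^[k] g₂) U := by
  induction k generalizing g₁ g₂ with
  | zero => exact h
  | succ k ih =>
    refine ih fun t ht => ?_
    simp only [sinD, (Filter.eventuallyEq_of_mem (hU.mem_nhds ht) h).deriv_eq]

lemma contDiffOn_sinD_iterate {U : Set ℝ} (hU : IsOpen U) (hsin : ∀ t ∈ U, sin t ≠ 0)
    (k m : ℕ) {g : ℝ → ℝ} (hg : ContDiffOn ℝ (m + k : ℕ) g U) :
    ContDiffOn ℝ m (sinD^[k] g) U := by
  induction k generalizing g with
  | zero => simpa using hg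
  | succ k ih =>
    refine ih ((hg.deriv_of_isOpen hU ?_).div contDiff_sin.contDiffOn hsin)
    push_cast
    rw [add_assoc, add_comm (k : WithTop ℕ∞)]

lemma deriv_sinD_iterate {θ : ℝ} (hθ : sin θ ≠ 0) (k : ℕ) (g : ℝ → ℝ) :
    deriv (sinD^[k] g) θ = sin θ * sinD^[k + 1] g θ := by
  rw [Function.iterate_succ_apply', sinD, mul_div_cancel₀ _ hθ]

lemma contDiffOn_sin_pow_mul_psiF_mul (α β : ℝ) (k : ℕ) {n : WithTop ℕ∞} {f : ℝ → ℝ}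
    (hf : ContDiffOn ℝ n f (Ioo 0 π)) :
    ContDiffOn ℝ n (fun t => sin t ^ k * psiF α β t * f t) (Ioo 0 π) :=
  ((contDiff_sin.pow k).contDiffOn.mul (contDiffOn_psiF α β n)).mul hf

lemma jacobiDStar_eq_of_eqOn (α β : ℝ) {k : ℕ} {g h : ℝ → ℝ}
    (hh : ContDiffOn ℝ (k + 1 : ℕ) h (Ioo 0 π))
    (hg : EqOn g (fun t => (-1) ^ k * sinD^[k] h t / psiF α β t) (Ioo 0 π))
    {θ : ℝ} (hθ : θ ∈ Ioo 0 π) :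
    jacobiDStar α β g θ = (-1) ^ (k + 1) / psiF α β θ * sin θ * sinD^[k + 1] h θ := by
  have hsin : ∀ t ∈ Ioo 0 π, sin t ≠ 0 := fun t ht => (sin_pos_of_mem_Ioo ht).ne'
  have hdiff : DifferentiableAt ℝ (sinD^[k] h) θ :=
    ((contDiffOn_sinD_iterate isOpen_Ioo hsin k 1 (by rwa [add_comm])).differentiableOn
      one_ne_zero).differentiableAt (isOpen_Ioo.mem_nhds hθ)
  rw [jacobiDStar_congr (Filter.eventuallyEq_of_mem (isOpen_Ioo.mem_nhds hθ) hg),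
    jacobiDStar_div_psiF α β hθ (hdiff.const_mul _), deriv_const_mul _ hdiff,
    deriv_sinD_iterate (hsin θ hθ)]
  ring

lemma jacobiDkStar_add_one_eqOn (k : ℕ) (α β : ℝ) {f : ℝ → ℝ} (hf : ContDiffOn ℝ k f (Ioo 0 π)) :
    EqOn (jacobiDkStar (α + 1) (β + 1) k f)
      (fun t => (-1) ^ k * sinD^[k] (fun s => sin s ^ k * psiF α β s * f s) t / psiF α β t)
      (Ioo 0 π) := by
  induction k generalizing α β with
  | zero =>
    intro t ht
    simp only [jacobiDkStar, pow_zero, one_mul, Function.iterate_zero_apply]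
    field_simp [(psiF_pos α β ht).ne']
  | succ k ih =>
    intro t ht
    have hshift : EqOn (fun s => sin s ^ k * psiF (α + 1) (β + 1) s * f s)
        (fun s => 1 / 2 * (sin s ^ (k + 1) * psiF α β s * f s)) (Ioo 0 π) := fun s hs => by
      simp only [psiF_add_one α β hs]
      ring
    have hiter := sinD_iterate_eqOn isOpen_Ioo (k + 1) hshift ht
    rw [sinD_iterate_const_mul] at hiter
    change jacobiDStar (α + 1) (β + 1) (jacobiDkStar (α + 1 + 1) (β + 1 + 1) k f) t = _
    rw [jacobiDStar_eq_of_eqOn (α + 1) (β + 1) (contDiffOn_sin_pow_mul_psiF_mul _ _ k hf)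
      (ih (α + 1) (β + 1) (hf.of_le (by norm_cast; omega))) ht, hiter, psiF_add_one α β ht]
    field_simp [(psiF_pos α β ht).ne', (sin_pos_of_mem_Ioo ht).ne']

theorem jacobiDkStar_factorization_general (α β : ℝ) (k : ℕ) (hk : 1 ≤ k)
    (f : ℝ → ℝ) (hf : ContDiffOn ℝ k f (Set.Ioo (0:ℝ) Real.pi)) :
    ∀ θ ∈ Set.Ioo (0:ℝ) Real.pi,
      jacobiDkStar α β k f θ
        = (-1:ℝ) ^ k / psiF α β θ * Real.sin θ *
            (sinD^[k] (fun t => Real.sin t ^ (k-1) * psiF α β t * f t)) θ := by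
  obtain ⟨j, rfl⟩ : ∃ j, k = j + 1 := ⟨k - 1, by omega⟩
  intro θ hθ
  rw [Nat.add_sub_cancel]
  exact jacobiDStar_eq_of_eqOn α β (contDiffOn_sin_pow_mul_psiF_mul α β j hf)
    (jacobiDkStar_add_one_eqOn j α β (hf.of_le (by norm_cast; omega))) hθ

theorem jacobiDkStar_factorization (α β : ℝ) (hα : -1 < α) (hβ : -1 < β) (k : ℕ) (hk : 1 ≤ k)
    (f : ℝ → ℝ) (hf : ContDiffOn ℝ k f (Set.Ioo (0:ℝ) Real.pi)) :
    ∀ θ ∈ Set.Ioo (0:ℝ) Real.pi,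
      jacobiDkStar α β k f θ
        = (-1:ℝ) ^ k / psiF α β θ * Real.sin θ *
            (sinD^[k] (fun t => Real.sin t ^ (k-1) * psiF α β t * f t)) θ :=
  jacobiDkStar_factorization_general α β k hk f hf
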